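/- Let Q be the probability measure on ℝ given by the mixture Q = (1/2)·δ₀ + (1/2)·P, where δ₀ is the point mass at 0 and P is the measure with density x ↦ 1/(π·x·(1 + (log x)²)) on (0, ∞) with respect to Lebesgue measure. For β ≤ 0, let Z(β) := ∫ exp(β·x) dQ(x) and let Q_β be the probability measure with density x ↦ exp(β·x)/Z(β) with respect to Q. Then the Kullback–Leibler divergence satisfies D(Q_β ∥ Q) ≤ log 2 for every β ≤ 0. -/

import Mathlib

open MeasureTheory
open scoped ENNReal

/-- The exponentiated Cauchy distribution: the measure with density
`x ↦ 1/(π·x·(1+(log x)²))` on `(0, ∞)` with respect to Lebesgue measure. -/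
noncomputable def expCauchy : Measure ℝ :=
  volume.withDensity fun x : ℝ =>
    if 0 < x then ENNReal.ofReal (1 / (Real.pi * x * (1 + Real.log x ^ 2))) else 0

/-- `Q = (1/2)·δ₀ + (1/2)·(exponentiated Cauchy)`. -/
noncomputable def Qmix : Measure ℝ :=
  (1 / 2 : ℝ≥0∞) • Measure.dirac (0 : ℝ) + (1 / 2 : ℝ≥0∞) • expCauchy

/-- The partition function `Z(β) = ∫ exp(β·x) dQ(x)`. -/
noncomputable def Zmix (β : ℝ) : ℝ := ∫ x, Real.exp (β * x) ∂Qmix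

/-- The element of the exponential family based on `Q` with canonical parameter `β`:
the measure with density `x ↦ exp(β·x)/Z(β)` with respect to `Q`. -/
noncomputable def Qexp (β : ℝ) : Measure ℝ :=
  Qmix.withDensity fun x : ℝ => ENNReal.ofReal (Real.exp (β * x) / Zmix β)

/-!
`Q` puts mass `1/2` at `0`, so `Z(β) ≥ 1/2` whenever `exp(β·x)` is `Q`-integrable (otherwise
`Z(β) = 0` and `Q_β = 0`); and `Q` lives on `[0, ∞)`, so `exp(β·x) ≤ 1` there for `β ≤ 0`.
Hence the density `dQ_β/dQ = exp(β·x)/Z(β)` is at most `2`, and its logarithm integrates to at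
most `log 2` against the (sub-)probability measure `Q_β`.
-/

open Real

lemma ae_nonneg_expCauchy : ∀ᵐ x ∂expCauchy, 0 ≤ x := by
  rw [expCauchy,
    ae_withDensity_iff (Measurable.ite measurableSet_Ioi (by fun_prop) measurable_const)]
  refine ae_of_all _ fun x hx => ?_
  by_contra hneg
  exact hx (if_neg (by linarith))

lemma ae_nonneg_Qmix : ∀ᵐ x ∂Qmix, 0 ≤ x := by
  rw [Qmix, ae_add_measure_iff]
  exact ⟨Measure.ae_smul_measure (by simp) _, Measure.ae_smul_measure ae_nonneg_expCauchy _⟩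

lemma div_two_le_integral_Qmix {g : ℝ → ℝ} (hg_nonneg : 0 ≤ g) (hg : Integrable g Qmix) :
    g 0 / 2 ≤ ∫ x, g x ∂Qmix :=
  calc g 0 / 2 = ∫ x, g x ∂((1 / 2 : ℝ≥0∞) • Measure.dirac 0) := by
        simp [integral_smul_measure, div_eq_inv_mul]
    _ ≤ ∫ x, g x ∂Qmix :=
        integral_mono_measure (Measure.le_add_right le_rfl) (ae_of_all _ hg_nonneg) hg

lemma log_exp_mul_div_Zmix_le_log_two {β x : ℝ} (hβ : β ≤ 0) (hx : 0 ≤ x) :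
    log (exp (β * x) / Zmix β) ≤ log 2 := by
  by_cases hint : Integrable (fun x => exp (β * x)) Qmix
  · have hZ : 1 / 2 ≤ Zmix β := by
      simpa [Zmix] using div_two_le_integral_Qmix (fun x => (exp_pos (β * x)).le) hint
    have hexp : exp (β * x) ≤ 1 := exp_le_one_iff.2 (mul_nonpos_of_nonpos_of_nonneg hβ hx)
    refine log_le_log (div_pos (exp_pos _) (by linarith)) ?_
    rw [div_le_iff₀ (by linarith)]
    linarith
  · simp only [Zmix, integral_undef hint, div_zero, log_zero]
    positivity

lemma integral_le_of_ae_le_const {α : Type*} [MeasurableSpace α] {μ : Measure α}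
    [IsZeroOrProbabilityMeasure μ] {f : α → ℝ} {c : ℝ} (hc : 0 ≤ c) (hf : ∀ᵐ x ∂μ, f x ≤ c) :
    ∫ x, f x ∂μ ≤ c := by
  rcases eq_zero_or_isProbabilityMeasure μ with rfl | _
  · simpa using hc
  by_cases hint : Integrable f μ
  · simpa using integral_mono_ae hint (integrable_const c) hf
  · simpa [integral_undef hint] using hc

/-- for all `β ≤ 0`, the Kullback–Leibler divergence
`D(Q_β ∥ Q) = ∫ log(dQ_β/dQ) dQ_β = ∫ log(exp(β·x)/Z(β)) dQ_β(x)` is at most `log 2`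
(i.e. at most 1 bit). -/
theorem kl_divergence_le_log_two (β : ℝ) (hβ : β ≤ 0) :
    ∫ x, Real.log (Real.exp (β * x) / Zmix β) ∂(Qexp β) ≤ Real.log 2 := by
  -- `Qexp β` is definitionally Mathlib's tilted measure `Qmix.tilted (β * ·)`.
  have : IsZeroOrProbabilityMeasure (Qexp β) := isZeroOrProbabilityMeasure_tilted
  refine integral_le_of_ae_le_const (log_nonneg one_le_two) ?_
  exact (tilted_absolutelyContinuous Qmix _).ae_le <|
    ae_nonneg_Qmix.mono fun x hx => log_exp_mul_div_Zmix_le_log_two hβ hx
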